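/- arXiv:1807.10193 — 2 statements merged into one kernel-verified Lean document; each statement's English description precedes it below -/
import Mathlib

section
/- Let k be a commutative ring, A a commutative k-algebra, R a k-algebra over A, and Ψ a pre-HS-structure on R over A/k. Define Γ^p_Δ(D) := Ψ^p_Δ(D*) ∈ U^p(R^opp;Δ) for every p, Δ and D ∈ HS^p_k(A;Δ), where R^opp is the opposite ring of R. The following are equivalent: (1) Γ is a HS-structure on R^opp over A/k; (2) for all p, q ∈ ℕ, all nonempty co-ideals Δ ⊆ ℕ^p and ∇ ⊆ ℕ^q, every substitution map φ : A[[s]]_Δ → A[[t]]_∇ and every D ∈ HS^p_k(A;Δ), one has Ψ^q_∇(φ•D) = Ψ^p_Δ(D)•φ^D. -/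
/-!
Passing to `Rᵐᵒᵖ` reverses products and turns `φ • r` into `r • φ`, so the compatibility of
`Γ = Ψ ∘ (-)*` with a substitution map `φ` at `D` reads `Ψ((φ • D)*) = Ψ(D*) • φ`.

(1) ⇒ (2): `φ • D` is the inverse of `φ^D • D*`, so compatibility of `Γ` with `φ^D` at `D*`
is exactly `Ψ(φ • D) = Ψ(D) • φ^D`.

(2) ⇒ (1): the other axioms pass from `Ψ` to `Γ` because `D ↦ D*` is an anti-homomorphism.
For compatibility with `φ` at `D`, let `Z = (φ • D)*`: the series `Z̃(φ(s^α))` are the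
coefficients of a substitution map `ψ = Z̃ ∘ φ ∘ D̃`, which satisfies `ψ • D* = Z` and
`ψ^{D*} = φ`, so (2) for `ψ` and `D*` is the required identity.
-/

open scoped Classical

namespace HS

/-- multi-indices in `ℕ^p` -/
abbrev MIdx (p : ℕ) := Fin p → ℕ

/-- the total weight `|α|` of a multi-index -/
def wt {p : ℕ} (α : MIdx p) : ℕ := ∑ i, α i

/-- a non-empty co-ideal of `ℕ^p` -/
def IsCoideal {p : ℕ} (Δ : Set (MIdx p)) : Prop :=
  Δ.Nonempty ∧ ∀ ⦃α : MIdx p⦄, α ∈ Δ → ∀ ⦃β : MIdx p⦄, β ≤ α → β ∈ Δ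

/-- Convolution product of two power series, given by their coefficient families:
this is the multiplication of `R[[s]]_Δ` (in terms of representatives). -/
def sconv {p : ℕ} {R : Type*} [NonUnitalNonAssocSemiring R] (f g : MIdx p → R) : MIdx p → R :=
  fun α => ∑ β ∈ Finset.Iic α, f β * g (α - β)

/-- Applying a series of linear operators to a series of module elements; for an
operator family `f`, `fapply f` is the induced `k[[s]]_Δ`-linear map `f̃ = ∑ f_β s^β`. -/
def fapply {p : ℕ} {k M N : Type*} [Semiring k] [AddCommMonoid M] [AddCommMonoid N]
    [Module k M] [Module k N] (f : MIdx p → (M →ₗ[k] N)) (m : MIdx p → M) : MIdx p → N :=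
  fun α => ∑ β ∈ Finset.Iic α, f β (m (α - β))

/-- a series of scalars acting on a series of module elements:
the module structure of `M[[s]]_Δ` over `A[[s]]_Δ` (in terms of representatives). -/
def smul' {p : ℕ} {A M : Type*} [Semiring A] [AddCommMonoid M] [Module A M]
    (a : MIdx p → A) (m : MIdx p → M) : MIdx p → M :=
  fun α => ∑ β ∈ Finset.Iic α, a β • m (α - β)

/-- the unit (delta) series `1` -/
def one' {p : ℕ} {R : Type*} [Zero R] [One R] : MIdx p → R :=
  fun α => if α = 0 then 1 else 0

/-- `D` is a `(p,Δ)`-variate Hasse–Schmidt derivation of `A` over `k`: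
`D_0 = id` and the Leibniz rule `D_α(xy) = ∑_{β+γ=α} D_β(x) D_γ(y)` for `α ∈ Δ`. -/
def IsHS (k A : Type*) [CommRing k] [CommRing A] [Algebra k A] {p : ℕ}
    (Δ : Set (MIdx p)) (D : MIdx p → Module.End k A) : Prop :=
  D 0 = 1 ∧ ∀ α ∈ Δ, ∀ x y : A,
    D α (x * y) = ∑ β ∈ Finset.Iic α, D β x * D (α - β) y

/-- A substitution map `φ : A[[s]]_Δ → A[[t]]_∇`, modelled by the family of its
coefficients `C α e = C_e(φ,α)` (the coefficient of `t^e` in `φ(s^α)`):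
it is multiplicative on monomials, unital, of order `≥ 1` (so `C α e = 0` for
`|e| < |α|`), kills the classes of monomials `s^α` with `α ∉ Δ`, and is
normalized to vanish outside `∇`. -/
structure SubstMap (A : Type*) [CommRing A] (p q : ℕ)
    (Δ : Set (MIdx p)) (nab : Set (MIdx q)) where
  C : MIdx p → MIdx q → A
  c_zero : ∀ e ∈ nab, C 0 e = if e = 0 then 1 else 0
  c_mul : ∀ α ∈ Δ, ∀ β ∈ Δ, ∀ e ∈ nab,
    C (α + β) e = ∑ u ∈ Finset.Iic e, C α u * C β (e - u)
  c_ord : ∀ α ∈ Δ, ∀ e ∈ nab, wt e < wt α → C α e = 0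
  c_suppL : ∀ α : MIdx p, α ∉ Δ → ∀ e : MIdx q, C α e = 0
  c_suppR : ∀ (α : MIdx p) (e : MIdx q), e ∉ nab → C α e = 0

variable {A' : Type*} [CommRing A'] {p' q' : ℕ} {Δ' : Set (MIdx p')} {nab' : Set (MIdx q')}

/-- the map `A[[s]]_Δ → A[[t]]_∇` induced by a substitution map -/
def SubstMap.app (φ : SubstMap A' p' q' Δ' nab') (f : MIdx p' → A') : MIdx q' → A' :=
  fun e => ∑ α ∈ Finset.Iic (fun _ => wt e : MIdx p'), φ.C α e * f α

/-- `φ • D` for a series of `k`-linear endomorphisms of `A` -/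
def SubstMap.bulletEnd {k : Type*} [CommRing k] [Algebra k A']
    (φ : SubstMap A' p' q' Δ' nab') (D : MIdx p' → Module.End k A') :
    MIdx q' → Module.End k A' :=
  fun e => ∑ α ∈ Finset.Iic (fun _ => wt e : MIdx p'), φ.C α e • D α

/-- `φ • r` for a series with coefficients in a `k`-algebra `S` over `A`
(with structural map `ι : A → S`) -/
def SubstMap.bulletS {S : Type*} [Ring S] (ι : A' → S)
    (φ : SubstMap A' p' q' Δ' nab') (r : MIdx p' → S) : MIdx q' → S :=
  fun e => ∑ α ∈ Finset.Iic (fun _ => wt e : MIdx p'), ι (φ.C α e) * r α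

/-- `r • φ` for a series with coefficients in a `k`-algebra `S` over `A` -/
def SubstMap.bulletSR {S : Type*} [Ring S] (ι : A' → S)
    (φ : SubstMap A' p' q' Δ' nab') (r : MIdx p' → S) : MIdx q' → S :=
  fun e => ∑ α ∈ Finset.Iic (fun _ => wt e : MIdx p'), r α * ι (φ.C α e)

/-- `φ • m` for a series with coefficients in an `A`-module `M` -/
def SubstMap.bulletM {M : Type*} [AddCommMonoid M] [Module A' M]
    (φ : SubstMap A' p' q' Δ' nab') (m : MIdx p' → M) : MIdx q' → M :=
  fun e => ∑ α ∈ Finset.Iic (fun _ => wt e : MIdx p'), φ.C α e • m α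

/-- `φ` has constant coefficients, i.e. all the `C_e(φ,α)` come from `k` -/
def SubstMap.HasConstCoeffs (k : Type*) [CommRing k] [Algebra k A']
    (φ : SubstMap A' p' q' Δ' nab') : Prop :=
  ∀ (α : MIdx p') (e : MIdx q'), φ.C α e ∈ Set.range (algebraMap k A')

/-- a system of maps `Ψ^p_Δ : HS^p_k(A;Δ) → U^p(R;Δ)` on a `k`-algebra `R` over `A` -/
abbrev RSystem (k A R : Type*) [CommRing k] [CommRing A] [Algebra k A] : Type _ :=
  ∀ (p : ℕ) (Δ : Set (MIdx p)), (MIdx p → Module.End k A) → (MIdx p → R)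

/-- `Ψ` is a pre-HS-structure on the `k`-algebra `R` over `A` (structural map `ι`):
each `Ψ^p_Δ(D)` lies in `U^p(R;Δ)`, depends only on the class of `D`, the `Ψ^p_Δ`
are group homomorphisms, `Ψ^p_Δ(D)` is a `D`-element (Leibniz rule), and
`Ψ^q_∇(φ•D) = φ•Ψ^p_Δ(D)` for substitution maps `φ` with constant coefficients. -/
def IsPreHSStr (k A R : Type*) [CommRing k] [CommRing A] [Algebra k A]
    [Ring R] [Algebra k R] (ι : A → R) (Ψ : RSystem k A R) : Prop :=
  ∀ (p : ℕ) (Δ : Set (MIdx p)), IsCoideal Δ →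
    ∀ D : MIdx p → Module.End k A, IsHS k A Δ D →
      (Ψ p Δ D 0 = 1)
      ∧ (∀ D' : MIdx p → Module.End k A, IsHS k A Δ D' → (∀ α ∈ Δ, D α = D' α) →
          ∀ α ∈ Δ, Ψ p Δ D α = Ψ p Δ D' α)
      ∧ (∀ E : MIdx p → Module.End k A, IsHS k A Δ E →
          ∀ α ∈ Δ, Ψ p Δ (sconv D E) α = sconv (Ψ p Δ D) (Ψ p Δ E) α)
      ∧ (∃ t : MIdx p → R,
          (∀ α ∈ Δ, sconv (Ψ p Δ D) t α = (one' : MIdx p → R) α)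
          ∧ (∀ α ∈ Δ, sconv t (Ψ p Δ D) α = (one' : MIdx p → R) α))
      ∧ (∀ a : MIdx p → A, ∀ α ∈ Δ,
          sconv (Ψ p Δ D) (fun γ => ι (a γ)) α
            = sconv (fun γ => ι (fapply D a γ)) (Ψ p Δ D) α)
      ∧ (∀ (q : ℕ) (nab : Set (MIdx q)), IsCoideal nab →
          ∀ φ : SubstMap A p q Δ nab, φ.HasConstCoeffs k →
          ∀ e ∈ nab, Ψ q nab (φ.bulletEnd D) e = φ.bulletS ι (Ψ p Δ D) e)

/-- `Ψ` is a HS-structure on the `k`-algebra `R` over `A`: as `IsPreHSStr`, but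
with compatibility with the action of arbitrary substitution maps. -/
def IsHSStr (k A R : Type*) [CommRing k] [CommRing A] [Algebra k A]
    [Ring R] [Algebra k R] (ι : A → R) (Ψ : RSystem k A R) : Prop :=
  ∀ (p : ℕ) (Δ : Set (MIdx p)), IsCoideal Δ →
    ∀ D : MIdx p → Module.End k A, IsHS k A Δ D →
      (Ψ p Δ D 0 = 1)
      ∧ (∀ D' : MIdx p → Module.End k A, IsHS k A Δ D' → (∀ α ∈ Δ, D α = D' α) →
          ∀ α ∈ Δ, Ψ p Δ D α = Ψ p Δ D' α)
      ∧ (∀ E : MIdx p → Module.End k A, IsHS k A Δ E →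
          ∀ α ∈ Δ, Ψ p Δ (sconv D E) α = sconv (Ψ p Δ D) (Ψ p Δ E) α)
      ∧ (∃ t : MIdx p → R,
          (∀ α ∈ Δ, sconv (Ψ p Δ D) t α = (one' : MIdx p → R) α)
          ∧ (∀ α ∈ Δ, sconv t (Ψ p Δ D) α = (one' : MIdx p → R) α))
      ∧ (∀ a : MIdx p → A, ∀ α ∈ Δ,
          sconv (Ψ p Δ D) (fun γ => ι (a γ)) α
            = sconv (fun γ => ι (fapply D a γ)) (Ψ p Δ D) α)
      ∧ (∀ (q : ℕ) (nab : Set (MIdx q)), IsCoideal nab →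
          ∀ φ : SubstMap A p q Δ nab,
          ∀ e ∈ nab, Ψ q nab (φ.bulletEnd D) e = φ.bulletS ι (Ψ p Δ D) e)


open MulOpposite
open Set (EqOn)

section MultiIndex

variable {p : ℕ}

lemma wt_mono {α β : MIdx p} (h : β ≤ α) : wt β ≤ wt α :=
  Finset.sum_le_sum fun i _ => h i

lemma mem_Iic_const_of_wt_le {α : MIdx p} {n : ℕ} (h : wt α ≤ n) :
    α ∈ Finset.Iic (fun _ => n : MIdx p) :=
  Finset.mem_Iic.mpr fun i =>
    (Finset.single_le_sum (fun j _ => Nat.zero_le (α j)) (Finset.mem_univ i)).trans h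

lemma lt_wt_of_notMem_Iic_const {α : MIdx p} {n : ℕ}
    (h : α ∉ Finset.Iic (fun _ => n : MIdx p)) : n < wt α :=
  lt_of_not_ge fun hle => h (mem_Iic_const_of_wt_le hle)

lemma Iic_zero : Finset.Iic (0 : MIdx p) = {0} := by
  ext β
  simp

lemma IsCoideal.isLowerSet {Δ : Set (MIdx p)} (hΔ : IsCoideal Δ) : IsLowerSet Δ :=
  fun _ _ hle hα => hΔ.2 hα hle

lemma IsCoideal.zero_mem {Δ : Set (MIdx p)} (hΔ : IsCoideal Δ) : (0 : MIdx p) ∈ Δ :=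
  hΔ.1.elim fun _ hα => hΔ.2 hα zero_le

lemma sum_Iic_reflect {M : Type*} [AddCommMonoid M] (α : MIdx p) (F : MIdx p → MIdx p → M) :
    ∑ β ∈ Finset.Iic α, F β (α - β) = ∑ β ∈ Finset.Iic α, F (α - β) β := by
  refine Finset.sum_nbij' (α - ·) (α - ·) (fun _ _ => Finset.mem_Iic.mpr tsub_le_self)
    (fun _ _ => Finset.mem_Iic.mpr tsub_le_self) (fun β hβ => ?_) (fun β hβ => ?_) fun β hβ => ?_
  all_goals simp only [tsub_tsub_cancel_of_le (Finset.mem_Iic.mp hβ)]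

lemma le_and_le_tsub_iff {x y α : MIdx p} : x ≤ α ∧ y ≤ α - x ↔ x + y ≤ α :=
  ⟨fun h => (le_tsub_iff_left h.1).mp h.2, fun h => ⟨le_self_add.trans h, le_tsub_of_add_le_left h⟩⟩

lemma sum_Iic_reassoc {M : Type*} [AddCommMonoid M] (α : MIdx p)
    (G : MIdx p → MIdx p → MIdx p → M) :
    ∑ β ∈ Finset.Iic α, ∑ γ ∈ Finset.Iic β, G γ (β - γ) (α - β)
      = ∑ x ∈ Finset.Iic α, ∑ y ∈ Finset.Iic (α - x), G x y (α - x - y) := by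
  rw [Finset.sum_sigma', Finset.sum_sigma']
  refine Finset.sum_nbij' (fun q => ⟨q.2, q.1 - q.2⟩) (fun q => ⟨q.1 + q.2, q.1⟩) ?_ ?_ ?_ ?_ ?_
  · rintro ⟨β, γ⟩ hq
    simp only [Finset.mem_sigma, Finset.mem_Iic] at hq ⊢
    exact ⟨hq.2.trans hq.1, tsub_le_tsub_right hq.1 γ⟩
  · rintro ⟨x, y⟩ hq
    simp only [Finset.mem_sigma, Finset.mem_Iic] at hq ⊢
    exact ⟨le_and_le_tsub_iff.mp hq, le_self_add⟩
  · rintro ⟨β, γ⟩ hq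
    simp only [Finset.mem_sigma, Finset.mem_Iic] at hq
    simp [add_tsub_cancel_of_le hq.2]
  · rintro ⟨x, y⟩ -
    simp
  · rintro ⟨β, γ⟩ hq
    simp only [Finset.mem_sigma, Finset.mem_Iic] at hq
    simp [tsub_tsub, add_tsub_cancel_of_le hq.2]

lemma sum_Iic_tsub_comm {M : Type*} [AddCommMonoid M] (α : MIdx p) (F : MIdx p → MIdx p → M) :
    ∑ x ∈ Finset.Iic α, ∑ y ∈ Finset.Iic (α - x), F x y
      = ∑ y ∈ Finset.Iic α, ∑ x ∈ Finset.Iic (α - y), F x y := by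
  have key : ∀ x y : MIdx p, x ≤ α ∧ y ≤ α - x ↔ y ≤ α ∧ x ≤ α - y := fun x y => by
    rw [le_and_le_tsub_iff, le_and_le_tsub_iff, add_comm]
  rw [Finset.sum_sigma', Finset.sum_sigma']
  refine Finset.sum_nbij' (fun q => ⟨q.2, q.1⟩) (fun q => ⟨q.2, q.1⟩) ?_ ?_ (fun _ _ => rfl)
    (fun _ _ => rfl) fun _ _ => rfl
  · rintro ⟨x, y⟩ hq
    simp only [Finset.mem_sigma, Finset.mem_Iic] at hq ⊢
    exact (key x y).mp hq
  · rintro ⟨y, x⟩ hq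
    simp only [Finset.mem_sigma, Finset.mem_Iic] at hq ⊢
    exact (key x y).mpr hq

end MultiIndex

section Convolution

variable {p : ℕ} {R : Type*}

lemma sconv_congr [NonUnitalNonAssocSemiring R] {Δ : Set (MIdx p)} (hΔ : IsLowerSet Δ)
    {f f' g g' : MIdx p → R} (hf : EqOn f f' Δ) (hg : EqOn g g' Δ) :
    EqOn (sconv f g) (sconv f' g') Δ := fun α hα =>
  Finset.sum_congr rfl fun β hβ => by
    rw [hf (hΔ (Finset.mem_Iic.mp hβ) hα), hg (hΔ tsub_le_self hα)]

lemma sconv_zero [NonUnitalNonAssocSemiring R] (f g : MIdx p → R) :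
    sconv f g 0 = f 0 * g 0 := by
  simp [sconv, Iic_zero]

lemma sconv_assoc [NonUnitalSemiring R] (f g h : MIdx p → R) :
    sconv (sconv f g) h = sconv f (sconv g h) := by
  funext α
  simp only [sconv, Finset.sum_mul, Finset.mul_sum]
  rw [sum_Iic_reassoc α fun x y z => f x * g y * h z]
  simp only [mul_assoc]

lemma sum_Iic_const_mul_sconv [NonUnitalSemiring R] {n : ℕ}
    (c f g : MIdx p → R) (hc : ∀ β, n < wt β → c β = 0) :
    ∑ β ∈ Finset.Iic (fun _ => n : MIdx p), c β * sconv f g β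
      = ∑ α ∈ Finset.Iic (fun _ => n : MIdx p), ∑ γ ∈ Finset.Iic (fun _ => n : MIdx p),
          c (α + γ) * (f α * g γ) := by
  set N : MIdx p := fun _ => n
  -- `c (α + γ)` vanishes unless `α + γ ≤ N`
  have inner : ∀ α ∈ Finset.Iic N, ∑ γ ∈ Finset.Iic N, c (α + γ) * (f α * g γ)
      = ∑ γ ∈ Finset.Iic (N - α), c (α + γ) * (f α * g γ) := fun α hα => by
    refine (Finset.sum_subset (Finset.Iic_subset_Iic.mpr tsub_le_self) fun γ _ hγ => ?_).symm
    have hαγ : α + γ ∉ Finset.Iic N := fun h => hγ <| Finset.mem_Iic.mpr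
      (le_and_le_tsub_iff.mpr (Finset.mem_Iic.mp h)).2
    rw [hc _ (lt_wt_of_notMem_Iic_const hαγ), zero_mul]
  rw [Finset.sum_congr rfl inner]
  have lhs : ∀ β ∈ Finset.Iic N, c β * sconv f g β
      = ∑ γ ∈ Finset.Iic β, c (γ + (β - γ)) * (f γ * g (β - γ)) := fun β _ => by
    rw [sconv, Finset.mul_sum]
    exact Finset.sum_congr rfl fun γ hγ => by rw [add_tsub_cancel_of_le (Finset.mem_Iic.mp hγ)]
  rw [Finset.sum_congr rfl lhs]
  exact sum_Iic_reassoc N fun x y _ => c (x + y) * (f x * g y)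

variable [Semiring R]

lemma one'_eq_single : (one' : MIdx p → R) = Pi.single 0 1 := by
  funext α
  simp [one', Pi.single_apply]

lemma sconv_single_zero (f : MIdx p → R) (a : R) (α : MIdx p) :
    sconv f (Pi.single 0 a) α = f α * a := by
  rw [sconv, Finset.sum_eq_single_of_mem α (Finset.mem_Iic.mpr le_rfl)]
  · simp
  · intro β hβ hne
    simp [(tsub_pos_of_lt (lt_of_le_of_ne (Finset.mem_Iic.mp hβ) hne)).ne']

lemma single_zero_sconv (a : R) (f : MIdx p → R) (α : MIdx p) :
    sconv (Pi.single 0 a) f α = a * f α := by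
  rw [sconv, Finset.sum_eq_single_of_mem 0 (Finset.mem_Iic.mpr zero_le)]
  · simp
  · intro β _ hne
    simp [hne]

lemma sconv_one' (f : MIdx p → R) : sconv f one' = f := by
  funext α
  rw [one'_eq_single, sconv_single_zero, mul_one]

lemma one'_sconv (f : MIdx p → R) : sconv one' f = f := by
  funext α
  rw [one'_eq_single, single_zero_sconv, one_mul]

lemma left_inv_eqOn_right_inv {Δ : Set (MIdx p)} (hΔ : IsLowerSet Δ) {a b c : MIdx p → R}
    (hba : EqOn (sconv b a) one' Δ) (hac : EqOn (sconv a c) one' Δ) : EqOn b c Δ := fun α hα =>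
  calc b α = sconv b (sconv a c) α := by rw [sconv_congr hΔ (Set.eqOn_refl _ _) hac hα, sconv_one']
    _ = sconv (sconv b a) c α := by rw [sconv_assoc]
    _ = c α := by rw [sconv_congr hΔ hba (Set.eqOn_refl _ _) hα, one'_sconv]

end Convolution

section Fapply

variable {p : ℕ} {k M N : Type*} [Semiring k] [AddCommMonoid M] [AddCommMonoid N]
  [Module k M] [Module k N]

lemma fapply_congr {Δ : Set (MIdx p)} (hΔ : IsLowerSet Δ) {f f' : MIdx p → M →ₗ[k] N}
    {m m' : MIdx p → M} (hf : EqOn f f' Δ) (hm : EqOn m m' Δ) :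
    EqOn (fapply f m) (fapply f' m') Δ := fun α hα =>
  Finset.sum_congr rfl fun β hβ => by
    rw [hf (hΔ (Finset.mem_Iic.mp hβ) hα), hm (hΔ tsub_le_self hα)]

lemma fapply_sum (f : MIdx p → M →ₗ[k] N) {ι : Type*} (s : Finset ι) (m : ι → MIdx p → M) :
    fapply f (∑ i ∈ s, m i) = ∑ i ∈ s, fapply f (m i) := by
  funext α
  simp only [fapply, Finset.sum_apply, map_sum]
  exact Finset.sum_comm

lemma fapply_single_zero (f : MIdx p → M →ₗ[k] N) (x : M) (α : MIdx p) :
    fapply f (Pi.single 0 x) α = f α x := by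
  rw [fapply, Finset.sum_eq_single_of_mem α (Finset.mem_Iic.mpr le_rfl)]
  · simp
  · intro β hβ hne
    simp [(tsub_pos_of_lt (lt_of_le_of_ne (Finset.mem_Iic.mp hβ) hne)).ne']

lemma sconv_apply (f g : MIdx p → Module.End k M) (α : MIdx p) (x : M) :
    sconv f g α x = fapply f (fun γ => g γ x) α := by
  simp [sconv, fapply, LinearMap.sum_apply]

lemma one'_apply (α : MIdx p) (x : M) :
    (one' α : Module.End k M) x = (Pi.single 0 x : MIdx p → M) α := by
  by_cases h : α = 0 <;> simp [one', h]

lemma fapply_one' (m : MIdx p → M) : fapply (one' : MIdx p → Module.End k M) m = m := by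
  funext α
  rw [fapply, Finset.sum_eq_single_of_mem 0 (Finset.mem_Iic.mpr zero_le)]
  · simp [one']
  · intro β _ hne
    simp [one', hne]

lemma fapply_fapply (f g : MIdx p → Module.End k M) (m : MIdx p → M) :
    fapply f (fapply g m) = fapply (sconv f g) m := by
  funext α
  simp only [fapply, sconv, map_sum, LinearMap.sum_apply, Module.End.mul_apply]
  exact (sum_Iic_reassoc α fun x y z => f x (g y (m z))).symm

lemma eqOn_fapply_fapply {Δ : Set (MIdx p)} (hΔ : IsLowerSet Δ) {f g : MIdx p → Module.End k M}
    (hfg : EqOn (sconv f g) one' Δ) (m : MIdx p → M) : EqOn (fapply f (fapply g m)) m Δ := by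
  intro α hα
  rw [fapply_fapply, fapply_congr hΔ hfg (Set.eqOn_refl _ _) hα, fapply_one']

lemma fapply_single {A : Type*} [Semiring A] [Module k A] (D : MIdx p → Module.End k A)
    (α : MIdx p) (a : A) : fapply D (Pi.single α a) = sconv (Pi.single α 1) (fun γ => D γ a) := by
  funext β
  refine (sum_Iic_reflect β fun x y => D x ((Pi.single α a : MIdx p → A) y)).trans
    (Finset.sum_congr rfl fun γ _ => ?_)
  by_cases h : γ = α
  · subst h
    simp
  · simp [h]

end Fapply

section HasseSchmidt

variable {p : ℕ} {k A : Type*} [CommRing k] [CommRing A] [Algebra k A] {Δ : Set (MIdx p)}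
  {D E : MIdx p → Module.End k A}

lemma IsHS.apply_one (hΔ : IsLowerSet Δ) (hD : IsHS k A Δ D) {α : MIdx p} (hα : α ∈ Δ) :
    D α 1 = (Pi.single 0 1 : MIdx p → A) α := by
  induction α using WellFoundedLT.induction with
  | _ α ih =>
  rcases eq_or_ne α 0 with rfl | h0
  · simp [hD.1]
  -- in the Leibniz rule for `1 * 1` only the terms `β = 0` and `β = α` survive
  have hsum : ∑ β ∈ Finset.Iic α, D β 1 * D (α - β) 1 = D α 1 + D α 1 := by
    rw [Finset.sum_eq_add_of_mem 0 α (Finset.mem_Iic.mpr zero_le) (Finset.mem_Iic.mpr le_rfl)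
      h0.symm]
    · simp [hD.1]
    · rintro β hβ ⟨hβ0, hβα⟩
      have hβ' := Finset.mem_Iic.mp hβ
      rw [ih β (lt_of_le_of_ne hβ' hβα) (hΔ hβ' hα), Pi.single_eq_of_ne hβ0, zero_mul]
  have hleib := hD.2 α hα 1 1
  rw [mul_one, hsum, left_eq_add] at hleib
  simp [hleib, h0]

lemma IsHS.fapply_sconv (hΔ : IsLowerSet Δ) (hD : IsHS k A Δ D) (f g : MIdx p → A) :
    EqOn (fapply D (sconv f g)) (sconv (fapply D f) (fapply D g)) Δ := by
  intro α hα
  have lhs : fapply D (sconv f g) α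
      = ∑ v ∈ Finset.Iic α, ∑ u ∈ Finset.Iic (α - v),
          ∑ a ∈ Finset.Iic v, D a (f u) * D (v - a) (g (α - v - u)) := by
    refine Finset.sum_congr rfl fun v hv => ?_
    rw [sconv, map_sum]
    exact Finset.sum_congr rfl fun u _ => hD.2 v (hΔ (Finset.mem_Iic.mp hv) hα) _ _
  have rhs : sconv (fapply D f) (fapply D g) α
      = ∑ a ∈ Finset.Iic α, ∑ u ∈ Finset.Iic (α - a),
          ∑ b ∈ Finset.Iic (α - a - u), D a (f u) * D b (g (α - a - u - b)) := by
    have hexp : sconv (fapply D f) (fapply D g) α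
        = ∑ w ∈ Finset.Iic α, ∑ a ∈ Finset.Iic w, D a (f (w - a)) * fapply D g (α - w) :=
      Finset.sum_congr rfl fun w _ => Finset.sum_mul ..
    rw [hexp, sum_Iic_reassoc α fun x y z => D x (f y) * fapply D g z]
    simp only [fapply, Finset.mul_sum]
  rw [lhs, rhs, sum_Iic_tsub_comm]
  have inner : ∀ u ∈ Finset.Iic α, ∑ v ∈ Finset.Iic (α - u), ∑ a ∈ Finset.Iic v,
        D a (f u) * D (v - a) (g (α - v - u))
      = ∑ a ∈ Finset.Iic (α - u), ∑ b ∈ Finset.Iic (α - u - a),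
          D a (f u) * D b (g (α - u - a - b)) := fun u _ => by
    rw [← sum_Iic_reassoc (α - u) fun x y z => D x (f u) * D y (g z)]
    refine Finset.sum_congr rfl fun v _ => Finset.sum_congr rfl fun a _ => ?_
    rw [tsub_right_comm (a := α) (b := v) (c := u)]
  rw [Finset.sum_congr rfl inner, sum_Iic_tsub_comm]
  refine Finset.sum_congr rfl fun a _ => Finset.sum_congr rfl fun u _ => ?_
  rw [tsub_right_comm (a := α) (b := u) (c := a)]

lemma isHS_sconv (hΔ : IsLowerSet Δ) (hD : IsHS k A Δ D) (hE : IsHS k A Δ E) :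
    IsHS k A Δ (sconv D E) := by
  refine ⟨by rw [sconv_zero, hD.1, hE.1, one_mul], fun α hα x y => ?_⟩
  have hExy : EqOn (fun γ => E γ (x * y)) (sconv (fun γ => E γ x) (fun γ => E γ y)) Δ :=
    fun β hβ => hE.2 β hβ x y
  rw [sconv_apply, fapply_congr hΔ (Set.eqOn_refl _ _) hExy hα,
    hD.fapply_sconv hΔ _ _ hα]
  exact Finset.sum_congr rfl fun β _ => by rw [sconv_apply, sconv_apply]

end HasseSchmidt

namespace SubstMap

variable {A : Type*} [CommRing A] {p q : ℕ} {Δ : Set (MIdx p)} {nab : Set (MIdx q)}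
  (φ : SubstMap A p q Δ nab)

lemma C_eq_zero_of_wt_lt {α : MIdx p} {e : MIdx q} (h : wt e < wt α) : φ.C α e = 0 := by
  by_cases hα : α ∈ Δ
  · by_cases he : e ∈ nab
    · exact φ.c_ord α hα e he h
    · exact φ.c_suppR α e he
  · exact φ.c_suppL α hα e

lemma C_add (hΔ : IsLowerSet Δ) (α β : MIdx p) {e : MIdx q} (he : e ∈ nab) :
    φ.C (α + β) e = sconv (φ.C α) (φ.C β) e := by
  by_cases h : α ∈ Δ ∧ β ∈ Δ
  · exact φ.c_mul α h.1 β h.2 e he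
  have hαβ : α + β ∉ Δ := fun hαβ => h ⟨hΔ le_self_add hαβ, hΔ le_add_self hαβ⟩
  rw [φ.c_suppL _ hαβ]
  refine (Finset.sum_eq_zero fun u _ => ?_).symm
  rcases not_and_or.mp h with hα | hβ
  · rw [φ.c_suppL α hα, zero_mul]
  · rw [φ.c_suppL β hβ, mul_zero]

lemma app_eq_sum_Iic_const (f : MIdx p → A) (e : MIdx q) {n : ℕ} (hn : wt e ≤ n) :
    φ.app f e = ∑ α ∈ Finset.Iic (fun _ => n : MIdx p), φ.C α e * f α := by
  refine Finset.sum_subset (Finset.Iic_subset_Iic.mpr fun _ => hn) fun α _ hα => ?_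
  rw [φ.C_eq_zero_of_wt_lt (lt_wt_of_notMem_Iic_const hα), zero_mul]

lemma app_congr {f g : MIdx p → A} (h : EqOn f g Δ) : φ.app f = φ.app g := by
  funext e
  refine Finset.sum_congr rfl fun α _ => ?_
  by_cases hα : α ∈ Δ
  · rw [h hα]
  · rw [φ.c_suppL α hα, zero_mul, zero_mul]

lemma app_sum {ι : Type*} (s : Finset ι) (f : ι → MIdx p → A) :
    φ.app (∑ i ∈ s, f i) = ∑ i ∈ s, φ.app (f i) := by
  funext e
  simp only [app, Finset.sum_apply, Finset.mul_sum]
  exact Finset.sum_comm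

lemma app_single (α : MIdx p) (u : MIdx q) : φ.app (Pi.single α 1) u = φ.C α u := by
  by_cases hα : α ∈ Finset.Iic (fun _ => wt u : MIdx p)
  · simp [app, Pi.single_apply, hα]
  · simp [app, Pi.single_apply, hα, φ.C_eq_zero_of_wt_lt (lt_wt_of_notMem_Iic_const hα)]

lemma app_single_zero (a : A) {u : MIdx q} (hu : u ∈ nab) :
    φ.app (Pi.single 0 a) u = (Pi.single 0 a : MIdx q → A) u := by
  rw [app, Finset.sum_eq_single_of_mem 0 (Finset.mem_Iic.mpr zero_le) fun β _ hβ => by simp [hβ],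
    φ.c_zero u hu]
  by_cases h : u = 0 <;> simp [h]

lemma app_sconv (hΔ : IsLowerSet Δ) (f g : MIdx p → A) {e : MIdx q} (he : e ∈ nab) :
    φ.app (sconv f g) e = sconv (φ.app f) (φ.app g) e := by
  set B := Finset.Iic (fun _ => wt e : MIdx p)
  have hR : sconv (φ.app f) (φ.app g) e = ∑ u ∈ Finset.Iic e, ∑ α ∈ B, ∑ γ ∈ B,
      φ.C α u * f α * (φ.C γ (e - u) * g γ) := Finset.sum_congr rfl fun u hu => by
    rw [φ.app_eq_sum_Iic_const f u (wt_mono (Finset.mem_Iic.mp hu)),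
      φ.app_eq_sum_Iic_const g (e - u) (wt_mono tsub_le_self), Finset.sum_mul_sum]
  calc φ.app (sconv f g) e = ∑ α ∈ B, ∑ γ ∈ B, φ.C (α + γ) e * (f α * g γ) :=
        sum_Iic_const_mul_sconv _ f g fun β => φ.C_eq_zero_of_wt_lt
    _ = ∑ α ∈ B, ∑ γ ∈ B, ∑ u ∈ Finset.Iic e, φ.C α u * f α * (φ.C γ (e - u) * g γ) := by
        refine Finset.sum_congr rfl fun α _ => Finset.sum_congr rfl fun γ _ => ?_
        rw [φ.C_add hΔ α γ he, sconv, Finset.sum_mul]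
        exact Finset.sum_congr rfl fun u _ => by ring
    _ = sconv (φ.app f) (φ.app g) e :=
        ((Finset.sum_congr rfl fun _ _ => Finset.sum_comm).trans Finset.sum_comm).trans hR.symm

variable {k : Type*} [CommRing k] [Algebra k A]

lemma bulletEnd_apply (D : MIdx p → Module.End k A) (e : MIdx q) (a : A) :
    φ.bulletEnd D e a = φ.app (fun α => D α a) e := by
  simp [bulletEnd, app, LinearMap.sum_apply]

end SubstMap

lemma isHS_bulletEnd {k A : Type*} [CommRing k] [CommRing A] [Algebra k A] {p q : ℕ}
    {Δ : Set (MIdx p)} {nab : Set (MIdx q)} (hΔ : IsLowerSet Δ) (hnab : IsCoideal nab)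
    (φ : SubstMap A p q Δ nab) {D : MIdx p → Module.End k A} (hD : IsHS k A Δ D) :
    IsHS k A nab (φ.bulletEnd D) := by
  refine ⟨?_, fun e he x y => ?_⟩
  · have hbox : (fun _ => wt (0 : MIdx q) : MIdx p) = 0 := by
      funext i
      simp [wt]
    simp [SubstMap.bulletEnd, hbox, Iic_zero, φ.c_zero 0 hnab.zero_mem, hD.1]
  · have hDxy : EqOn (fun α => D α (x * y)) (sconv (fun α => D α x) (fun α => D α y)) Δ :=
      fun α hα => hD.2 α hα x y
    rw [φ.bulletEnd_apply, φ.app_congr hDxy, φ.app_sconv hΔ _ _ he]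
    exact Finset.sum_congr rfl fun u _ => by rw [φ.bulletEnd_apply, φ.bulletEnd_apply]

section Twist

variable {k A : Type*} [CommRing k] [CommRing A] [Algebra k A] {p q : ℕ} {Δ : Set (MIdx p)}
  {nab : Set (MIdx q)}

/-- The substitution map `s^α ↦ Z̃(φ(s^α))`; for `Z = (φ • D)*` it is the paper's `φ^D`. -/
noncomputable def SubstMap.compHS (φ : SubstMap A p q Δ nab) (hnab : IsLowerSet nab)
    {Z : MIdx q → Module.End k A} (hZ : IsHS k A nab Z) : SubstMap A p q Δ nab where
  C α e := if e ∈ nab then fapply Z (φ.C α) e else 0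
  c_zero e he := by
    have hC : EqOn (φ.C 0) (Pi.single 0 1) nab := fun u hu => by
      rw [φ.c_zero u hu, Pi.single_apply]
    rw [if_pos he, fapply_congr hnab (Set.eqOn_refl _ _) hC he, fapply_single_zero,
      hZ.apply_one hnab he, Pi.single_apply]
  c_mul α hα β hβ e he := by
    have hC : EqOn (φ.C (α + β)) (sconv (φ.C α) (φ.C β)) nab := φ.c_mul α hα β hβ
    rw [if_pos he, fapply_congr hnab (Set.eqOn_refl _ _) hC he, hZ.fapply_sconv hnab _ _ he]
    refine Finset.sum_congr rfl fun u hu => ?_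
    rw [if_pos (hnab (Finset.mem_Iic.mp hu) he), if_pos (hnab tsub_le_self he)]
  c_ord α _ e he hlt := by
    rw [if_pos he]
    refine Finset.sum_eq_zero fun b _ => ?_
    rw [φ.C_eq_zero_of_wt_lt ((wt_mono tsub_le_self).trans_lt hlt), map_zero]
  c_suppL α hα e := by
    split_ifs
    · exact Finset.sum_eq_zero fun b _ => by rw [φ.c_suppL α hα, map_zero]
    · rfl
  c_suppR α e he := if_neg he

namespace SubstMap

variable (φ : SubstMap A p q Δ nab)

lemma app_fapply_eq_single_zero (hΔ : IsLowerSet Δ) {D E : MIdx p → Module.End k A}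
    (hDE : EqOn (sconv D E) one' Δ) (a : A) {u : MIdx q} (hu : u ∈ nab) :
    φ.app (fapply D fun α => E α a) u = (Pi.single 0 a : MIdx q → A) u := by
  have hE : (fun α => E α a) = fapply E (Pi.single 0 a) :=
    funext fun α => (fapply_single_zero E a α).symm
  rw [hE, φ.app_congr (eqOn_fapply_fapply hΔ hDE _), φ.app_single_zero a hu]

lemma sconv_bulletEnd_eq_one' (hΔ : IsLowerSet Δ) {D E : MIdx p → Module.End k A}
    (hDE : EqOn (sconv D E) one' Δ) (φD : SubstMap A p q Δ nab)
    (hφD : ∀ f : MIdx p → A, ∀ e ∈ nab,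
      fapply (φ.bulletEnd D) (φD.app f) e = φ.app (fapply D f) e) :
    EqOn (sconv (φ.bulletEnd D) (φD.bulletEnd E)) one' nab := fun w hw => LinearMap.ext fun a => by
  simp only [sconv_apply, φD.bulletEnd_apply]
  rw [hφD _ w hw, φ.app_fapply_eq_single_zero hΔ hDE a hw, one'_apply]

variable (hnab : IsLowerSet nab) {Z : MIdx q → Module.End k A} (hZ : IsHS k A nab Z)

lemma compHS_app (g : MIdx p → A) {e : MIdx q} (he : e ∈ nab) :
    (φ.compHS hnab hZ).app g e
      = ∑ α ∈ Finset.Iic (fun _ => wt e : MIdx p), fapply Z (φ.C α) e * g α :=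
  Finset.sum_congr rfl fun α _ => by simp only [compHS, if_pos he]

variable (hΔ : IsLowerSet Δ) {D E : MIdx p → Module.End k A}
  (hZφD : EqOn (sconv Z (φ.bulletEnd D)) one' nab)
include hΔ hZφD

lemma compHS_app_eq (g : MIdx p → A) {e : MIdx q} (he : e ∈ nab) :
    (φ.compHS hnab hZ).app g e = fapply Z (φ.app (fapply D g)) e := by
  set B := Finset.Iic (fun _ => wt e : MIdx p)
  have monomial (α : MIdx p) (a : A) :
      fapply Z (φ.app (fapply D (Pi.single α a))) e = fapply Z (φ.C α) e * a := by
    have h1 : EqOn (φ.app (fapply D (Pi.single α a))) (sconv (φ.C α) fun w => φ.bulletEnd D w a)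
        nab := fun u hu => by
      rw [fapply_single, φ.app_sconv hΔ _ _ hu]
      exact Finset.sum_congr rfl fun v _ => by simp only [φ.app_single, φ.bulletEnd_apply]
    have h2 : EqOn (fapply Z fun w => φ.bulletEnd D w a) (Pi.single 0 a) nab := fun w hw => by
      rw [← sconv_apply, hZφD hw, one'_apply]
    rw [fapply_congr hnab (Set.eqOn_refl _ _) h1 he, hZ.fapply_sconv hnab _ _ he,
      sconv_congr hnab (Set.eqOn_refl _ _) h2 he, sconv_single_zero]
  -- only the values of `g` on `B` enter into the right-hand side
  have htrunc : fapply Z (φ.app (fapply D g)) e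
      = fapply Z (φ.app (fapply D (∑ α ∈ B, Pi.single α (g α)))) e := by
    have hB : IsLowerSet (B : Set (MIdx p)) := by
      rw [Finset.coe_Iic]
      exact isLowerSet_Iic _
    have hg : EqOn g (∑ α ∈ B, Pi.single α (g α)) B := fun β hβ => by
      simp [Finset.mem_coe.mp hβ]
    refine fapply_congr (isLowerSet_Iic e) (Set.eqOn_refl _ _) (fun u hu => ?_) Set.self_mem_Iic
    refine Finset.sum_congr rfl fun α hα => congrArg _ ?_
    exact fapply_congr hB (Set.eqOn_refl _ _) hg
      (Finset.Iic_subset_Iic.mpr (fun _ => wt_mono hu) hα)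
  rw [φ.compHS_app hnab hZ g he, htrunc, fapply_sum, φ.app_sum, fapply_sum, Finset.sum_apply]
  exact Finset.sum_congr rfl fun α _ => (monomial α (g α)).symm

variable (hDE : EqOn (sconv D E) one' Δ)
include hDE

lemma bulletEnd_compHS : EqOn ((φ.compHS hnab hZ).bulletEnd E) Z nab := fun e he =>
  LinearMap.ext fun a => by
    rw [bulletEnd_apply, φ.compHS_app_eq hnab hZ hΔ hZφD _ he,
      fapply_congr hnab (Set.eqOn_refl _ _) (fun _ hu => φ.app_fapply_eq_single_zero hΔ hDE a hu)
        he,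
      fapply_single_zero]

lemma fapply_bulletEnd_compHS (f : MIdx p → A) :
    EqOn (fapply ((φ.compHS hnab hZ).bulletEnd E) (φ.app f)) ((φ.compHS hnab hZ).app (fapply E f))
      nab := fun e he => by
  rw [fapply_congr hnab (φ.bulletEnd_compHS hnab hZ hΔ hZφD hDE) (Set.eqOn_refl _ _) he,
    φ.compHS_app_eq hnab hZ hΔ hZφD _ he, φ.app_congr (eqOn_fapply_fapply hΔ hDE f)]

end SubstMap

end Twist

section Opposite

variable {R : Type*}

lemma op_sconv [NonUnitalNonAssocSemiring R] {p : ℕ} (f g : MIdx p → R) (α : MIdx p) :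
    sconv (fun β => op (f β)) (fun β => op (g β)) α = op (sconv g f α) := by
  rw [sconv, sconv, Finset.op_sum, sum_Iic_reflect α fun x y => op (g x * f y)]
  simp only [op_mul]

lemma one'_op [Semiring R] {p : ℕ} (α : MIdx p) :
    (one' α : Rᵐᵒᵖ) = op (one' α) := by
  by_cases h : α = 0 <;> simp [one', h]

variable {A : Type*} [CommRing A] {p q : ℕ} {Δ : Set (MIdx p)} {nab : Set (MIdx q)}
  (φ : SubstMap A p q Δ nab)

lemma SubstMap.bulletS_op [Ring R] (ι : A → R) (r : MIdx p → R) (e : MIdx q) :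
    φ.bulletS (fun a => op (ι a)) (fun α => op (r α)) e = op (φ.bulletSR ι r e) := by
  simp only [SubstMap.bulletS, SubstMap.bulletSR, Finset.op_sum, op_mul]

lemma SubstMap.bulletSR_congr [Ring R] {ι : A → R} (hι : ι 0 = 0)
    {r r' : MIdx p → R} (h : EqOn r r' Δ) (e : MIdx q) :
    φ.bulletSR ι r e = φ.bulletSR ι r' e := by
  refine Finset.sum_congr rfl fun α _ => ?_
  by_cases hα : α ∈ Δ
  · rw [h hα]
  · rw [φ.c_suppL α hα, hι, mul_zero, mul_zero]

end Opposite

section Structures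

variable {k A R : Type*} [CommRing k] [CommRing A] [Algebra k A]
  {p : ℕ} {Δ : Set (MIdx p)} {D D' : MIdx p → Module.End k A}

variable (k A) in
def IsHSInvChoice (star : RSystem k A (Module.End k A)) : Prop :=
  ∀ (p : ℕ) (Δ : Set (MIdx p)), IsCoideal Δ → ∀ D : MIdx p → Module.End k A, IsHS k A Δ D →
    IsHS k A Δ (star p Δ D) ∧ EqOn (sconv D (star p Δ D)) one' Δ
      ∧ EqOn (sconv (star p Δ D) D) one' Δ

namespace IsHSInvChoice

variable {star : RSystem k A (Module.End k A)} (hstar : IsHSInvChoice k A star)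
  (hΔ : IsCoideal Δ) (hD : IsHS k A Δ D)
include hstar hΔ hD

lemma eqOn_of_left_inv {E : MIdx p → Module.End k A} (hED : EqOn (sconv E D) one' Δ) :
    EqOn (star p Δ D) E Δ :=
  (left_inv_eqOn_right_inv hΔ.isLowerSet hED (hstar p Δ hΔ D hD).2.1).symm

lemma star_star : EqOn (star p Δ (star p Δ D)) D Δ :=
  hstar.eqOn_of_left_inv hΔ (hstar p Δ hΔ D hD).1 (hstar p Δ hΔ D hD).2.1

lemma star_congr (hD' : IsHS k A Δ D') (h : EqOn D D' Δ) :
    EqOn (star p Δ D) (star p Δ D') Δ :=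
  hstar.eqOn_of_left_inv hΔ hD <|
    (sconv_congr hΔ.isLowerSet (Set.eqOn_refl _ _) h).trans (hstar p Δ hΔ D' hD').2.2

lemma star_sconv (hD' : IsHS k A Δ D') :
    EqOn (star p Δ (sconv D D')) (sconv (star p Δ D') (star p Δ D)) Δ := by
  have hΔ' := hΔ.isLowerSet
  refine hstar.eqOn_of_left_inv hΔ (isHS_sconv hΔ' hD hD') fun α hα => ?_
  have hcancel : EqOn (sconv (star p Δ D) (sconv D D')) D' Δ := fun β hβ => by
    rw [← sconv_assoc, sconv_congr hΔ' (hstar p Δ hΔ D hD).2.2 (Set.eqOn_refl _ _) hβ,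
      one'_sconv]
  rw [sconv_assoc, sconv_congr hΔ' (Set.eqOn_refl _ _) hcancel hα]
  exact (hstar p Δ hΔ D' hD').2.2 hα

end IsHSInvChoice

/-- The paper's `Γ`. -/
def opStar (Ψ : RSystem k A R) (star : RSystem k A (Module.End k A)) : RSystem k A Rᵐᵒᵖ :=
  fun p Δ D α => op (Ψ p Δ (star p Δ D) α)

lemma opStar_apply (Ψ : RSystem k A R) (star : RSystem k A (Module.End k A)) :
    opStar Ψ star p Δ D = fun α => op (Ψ p Δ (star p Δ D) α) :=
  rfl

variable [Ring R] [Algebra k R]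

lemma IsPreHSStr.eqOn_of_eqOn {ι : A → R} {Ψ : RSystem k A R} (hΨ : IsPreHSStr k A R ι Ψ)
    (hΔ : IsCoideal Δ) (hD : IsHS k A Δ D) (hD' : IsHS k A Δ D') (h : EqOn D D' Δ) :
    EqOn (Ψ p Δ D) (Ψ p Δ D') Δ :=
  (hΨ p Δ hΔ D hD).2.1 D' hD' h

/-- Condition (2) of the theorem: `φD` ranges over the substitution maps with
`(φ • D)~ ∘ φD = φ ∘ D̃`, i.e. over the possible values of `φ^D`. -/
def IsTwistCompatible (ι : A →ₐ[k] R) (Ψ : RSystem k A R) : Prop :=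
  ∀ (p q : ℕ) (Δ : Set (MIdx p)) (nab : Set (MIdx q)),
    IsCoideal Δ → IsCoideal nab →
    ∀ φ : SubstMap A p q Δ nab,
    ∀ D : MIdx p → Module.End k A, IsHS k A Δ D →
    ∀ φD : SubstMap A p q Δ nab,
      (∀ f : MIdx p → A, ∀ e ∈ nab,
        fapply (φ.bulletEnd D) (φD.app f) e = φ.app (fapply D f) e) →
      ∀ e ∈ nab, Ψ q nab (φ.bulletEnd D) e = φD.bulletSR (⇑ι) (Ψ p Δ D) e

variable {ι : A →ₐ[k] R} {Ψ : RSystem k A R} (hΨ : IsPreHSStr k A R ι Ψ)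
  {star : RSystem k A (Module.End k A)} (hstar : IsHSInvChoice k A star)
include hΨ hstar

theorem isTwistCompatible_of_isHSStr_opStar
    (hΓ : IsHSStr k A Rᵐᵒᵖ (fun a => op (ι a)) (opStar Ψ star)) : IsTwistCompatible ι Ψ := by
  intro p q Δ nab hΔ hnab φ D hD φD hφD e he
  obtain ⟨hE, hDE, -⟩ := hstar p Δ hΔ D hD
  have hφDE := isHS_bulletEnd hΔ.isLowerSet hnab φD hE
  have hinv : EqOn (star q nab (φD.bulletEnd (star p Δ D))) (φ.bulletEnd D) nab :=
    hstar.eqOn_of_left_inv hnab hφDE (φ.sconv_bulletEnd_eq_one' hΔ.isLowerSet hDE φD hφD)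
  obtain ⟨-, -, -, -, -, hΓsubst⟩ := hΓ p Δ hΔ _ hE
  have hcompat := hΓsubst q nab hnab φD e he
  rw [opStar_apply, opStar_apply, φD.bulletS_op] at hcompat
  calc Ψ q nab (φ.bulletEnd D) e = Ψ q nab (star q nab (φD.bulletEnd (star p Δ D))) e :=
        (hΨ.eqOn_of_eqOn hnab (hstar q nab hnab _ hφDE).1 (isHS_bulletEnd hΔ.isLowerSet hnab φ hD)
          hinv he).symm
    _ = φD.bulletSR ι (Ψ p Δ (star p Δ (star p Δ D))) e := op_injective hcompat
    _ = φD.bulletSR ι (Ψ p Δ D) e :=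
        φD.bulletSR_congr (map_zero ι)
          (hΨ.eqOn_of_eqOn hΔ (hstar p Δ hΔ _ hE).1 hD (hstar.star_star hΔ hD)) e

lemma opStar_bulletEnd (htwist : IsTwistCompatible ι Ψ) {q : ℕ} {nab : Set (MIdx q)}
    (hΔ : IsCoideal Δ) (hnab : IsCoideal nab) (φ : SubstMap A p q Δ nab) (hD : IsHS k A Δ D) :
    EqOn (opStar Ψ star q nab (φ.bulletEnd D)) (φ.bulletS (fun a => op (ι a)) (opStar Ψ star p Δ D))
      nab := by
  intro e he
  obtain ⟨hE, hDE, -⟩ := hstar p Δ hΔ D hD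
  obtain ⟨hZ, -, hZφD⟩ := hstar q nab hnab _ (isHS_bulletEnd hΔ.isLowerSet hnab φ hD)
  set ψ := φ.compHS hnab.isLowerSet hZ
  have hψ : EqOn (ψ.bulletEnd (star p Δ D)) (star q nab (φ.bulletEnd D)) nab :=
    φ.bulletEnd_compHS hnab.isLowerSet hZ hΔ.isLowerSet hZφD hDE
  have hcompat := htwist p q Δ nab hΔ hnab ψ (star p Δ D) hE φ
    (fun f _ hw => φ.fapply_bulletEnd_compHS hnab.isLowerSet hZ hΔ.isLowerSet hZφD hDE f hw) e he
  rw [opStar_apply, opStar_apply, φ.bulletS_op, ← hcompat]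
  exact congrArg op
    (hΨ.eqOn_of_eqOn hnab hZ (isHS_bulletEnd hΔ.isLowerSet hnab ψ hE) hψ.symm he)

theorem isHSStr_opStar (htwist : IsTwistCompatible ι Ψ) :
    IsHSStr k A Rᵐᵒᵖ (fun a => op (ι a)) (opStar Ψ star) := by
  intro p Δ hΔ D hD
  have hΔ' := hΔ.isLowerSet
  obtain ⟨hE, -, hED⟩ := hstar p Δ hΔ D hD
  obtain ⟨hΨ0, -, -, ⟨t, ht, ht'⟩, hΨleib, -⟩ := hΨ p Δ hΔ (star p Δ D) hE
  refine ⟨congrArg op hΨ0, fun D' hD' hDD' α hα => ?_, fun D' hD' α hα => ?_,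
    ⟨fun α => op (t α), fun α hα => ?_, fun α hα => ?_⟩, fun a α hα => ?_,
    fun q nab hnab φ => opStar_bulletEnd hΨ hstar htwist hΔ hnab φ hD⟩
  · exact congrArg op (hΨ.eqOn_of_eqOn hΔ hE (hstar p Δ hΔ D' hD').1
      (hstar.star_congr hΔ hD hD' hDD') hα)
  · obtain ⟨hE', -⟩ := hstar p Δ hΔ D' hD'
    obtain ⟨-, -, hΨmul, -⟩ := hΨ p Δ hΔ _ hE'
    simp only [opStar_apply]
    rw [op_sconv, hΨ.eqOn_of_eqOn hΔ (hstar p Δ hΔ _ (isHS_sconv hΔ' hD hD')).1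
      (isHS_sconv hΔ' hE' hE) (hstar.star_sconv hΔ hD hD') hα]
    exact congrArg op (hΨmul _ hE α hα)
  · simp only [opStar_apply]
    rw [op_sconv, ht' α hα, one'_op]
  · simp only [opStar_apply]
    rw [op_sconv, ht α hα, one'_op]
  · -- `Ψ(D*)` is a `D*`-element, and `D*~ (D̃ a) = a`
    simp only [opStar_apply]
    rw [op_sconv, op_sconv, hΨleib (fapply D a) α hα]
    exact congrArg op (sconv_congr hΔ'
      (fun γ hγ => congrArg ι (eqOn_fapply_fapply hΔ' hED a hγ)) (Set.eqOn_refl _ _) hα).symm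

end Structures

/-- Let `Ψ` be a pre-HS-structure on a `k`-algebra `R` over `A`,
let `star` assign to each Hasse–Schmidt derivation an inverse, and let
`Γ^p_Δ(D) := Ψ^p_Δ(D*)`, viewed with values in the opposite ring `Rᵐᵒᵖ`.
Then `Γ` is a HS-structure on `Rᵐᵒᵖ` over `A/k` if and only if
`Ψ^q_∇(φ•D) = Ψ^p_Δ(D) • φ^D` for every substitution map `φ` and every
Hasse–Schmidt derivation `D` (where `φ^D` is the unique substitution map with
`(φ•D)~ ∘ φ^D = φ ∘ D̃`). -/
theorem stmt16 (k A R : Type*) [CommRing k] [CommRing A] [Algebra k A]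
    [Ring R] [Algebra k R] (ι : A →ₐ[k] R)
    (Ψ : RSystem k A R) (hΨ : IsPreHSStr k A R (⇑ι) Ψ)
    (star : ∀ (p : ℕ), Set (MIdx p) → (MIdx p → Module.End k A) → (MIdx p → Module.End k A))
    (hstar : ∀ (p : ℕ) (Δ : Set (MIdx p)), IsCoideal Δ →
      ∀ D : MIdx p → Module.End k A, IsHS k A Δ D →
        IsHS k A Δ (star p Δ D)
        ∧ (∀ α ∈ Δ, sconv D (star p Δ D) α = (one' : MIdx p → Module.End k A) α)
        ∧ (∀ α ∈ Δ, sconv (star p Δ D) D α = (one' : MIdx p → Module.End k A) α)) :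
    -- (1) `Γ = Ψ ∘ star`, with values in `Rᵐᵒᵖ`, is a HS-structure on `Rᵐᵒᵖ` over `A/k`
    (IsHSStr k A Rᵐᵒᵖ (fun a => MulOpposite.op (ι a))
      (fun p Δ D α => MulOpposite.op (Ψ p Δ (star p Δ D) α)))
    ↔
    -- (2) `Ψ^q_∇(φ•D) = Ψ^p_Δ(D) • φ^D` for all substitution maps `φ` and all `D`
    (∀ (p q : ℕ) (Δ : Set (MIdx p)) (nab : Set (MIdx q)),
      IsCoideal Δ → IsCoideal nab →
      ∀ φ : SubstMap A p q Δ nab,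
      ∀ D : MIdx p → Module.End k A, IsHS k A Δ D →
      ∀ φD : SubstMap A p q Δ nab,
        (∀ f : MIdx p → A, ∀ e ∈ nab,
          fapply (φ.bulletEnd D) (φD.app f) e = φ.app (fapply D f) e) →
        ∀ e ∈ nab, Ψ q nab (φ.bulletEnd D) e = φD.bulletSR (⇑ι) (Ψ p Δ D) e) :=
  ⟨isTwistCompatible_of_isHSStr_opStar hΨ hstar, isHSStr_opStar hΨ hstar⟩

end HS
end

section
/- Let ℓ₁, ℓ₂ ≥ 1 be integers. For any integers a', b', a'', b'' ≥ 0 with a' ≥ ℓ₁ and b' ≥ ℓ₂, one has ⌊(a'+b')/(ℓ₁+ℓ₂)⌋ + ⌊a''/ℓ₁⌋ + ⌊b''/ℓ₂⌋ < ⌊(a'+a'')/ℓ₁⌋ + ⌊(b'+b'')/ℓ₂⌋. -/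
/-- For integers `ℓ₁, ℓ₂ ≥ 1` and `a', b', a'', b'' ≥ 0` with
`a' ≥ ℓ₁` and `b' ≥ ℓ₂`, one has
`⌊(a'+b')/(ℓ₁+ℓ₂)⌋ + ⌊a''/ℓ₁⌋ + ⌊b''/ℓ₂⌋ < ⌊(a'+a'')/ℓ₁⌋ + ⌊(b'+b'')/ℓ₂⌋`. -/
theorem stmt17 (l₁ l₂ a' b' a'' b'' : ℕ) (hl₁ : 1 ≤ l₁) (hl₂ : 1 ≤ l₂)
    (ha' : l₁ ≤ a') (hb' : l₂ ≤ b') :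
    (a' + b') / (l₁ + l₂) + a'' / l₁ + b'' / l₂
      < (a' + a'') / l₁ + (b' + b'') / l₂ := by
  have hl₁0 : 0 < l₁ := hl₁
  have hl₂0 : 0 < l₂ := hl₂
  set p := a' / l₁ with hp
  set q := b' / l₂ with hq
  have hp1 : 1 ≤ p := (Nat.one_le_div_iff hl₁0).2 ha'
  have hq1 : 1 ≤ q := (Nat.one_le_div_iff hl₂0).2 hb'
  -- strict bound on the combined quotient
  have hkey : (a' + b') / (l₁ + l₂) < p + q := by
    apply Nat.div_lt_of_lt_mul
    have hma := Nat.div_add_mod a' l₁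
    have hmb := Nat.div_add_mod b' l₂
    have hra := Nat.mod_lt a' hl₁0
    have hrb := Nat.mod_lt b' hl₂0
    have ha : a' < (p + 1) * l₁ := by rw [hp]; nlinarith
    have hb : b' < (q + 1) * l₂ := by rw [hq]; nlinarith
    calc a' + b' < (p + 1) * l₁ + (q + 1) * l₂ := by omega
      _ ≤ (l₁ + l₂) * (p + q) := by nlinarith
  -- superadditivity of division
  have h1 : p + a'' / l₁ ≤ (a' + a'') / l₁ := by
    rw [Nat.le_div_iff_mul_le hl₁0, Nat.add_mul]
    exact Nat.add_le_add (Nat.div_mul_le_self a' l₁) (Nat.div_mul_le_self a'' l₁)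
  have h2 : q + b'' / l₂ ≤ (b' + b'') / l₂ := by
    rw [Nat.le_div_iff_mul_le hl₂0, Nat.add_mul]
    exact Nat.add_le_add (Nat.div_mul_le_self b' l₂) (Nat.div_mul_le_self b'' l₂)
  omega
end
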